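/- arXiv:math/0611458 — 2 statements merged into one kernel-verified Lean document; each statement's English description precedes it below -/
import Mathlib

section
/- Let p(x,ξ) = ξ² − |∇φ(x)|² and b(x,ξ) = 2∇φ(x)·ξ, where φ(x) = log|x − x₀| on ℝⁿ \ {x₀}. Then φ is a limiting Carleman weight: the Poisson bracket {p, b}(x,ξ) = ∇_ξ p · ∇_x b − ∇_x p · ∇_ξ b vanishes at every point (x,ξ) with p(x,ξ) = 0 and b(x,ξ) = 0. -/
/-!
Write `a = x - x₀`. The four partial gradients of `p` and `b` are explicit:
`∇_ξ p = 2ξ`, `∇_x p = 2a/|a|⁴`, `∇_ξ b = 2a/|a|²` and `∇_x b = 2ξ/|a|² - 4⟨a,ξ⟩a/|a|⁴`.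
Pairing them gives the identity `{p, b} = 4p/|a|² - 2b²` on all of phase space over `x ≠ x₀`,
so the bracket vanishes wherever `p = b = 0`.
-/

open scoped Gradient RealInnerProductSpace

section GradientCalculus

variable {F : Type*} [NormedAddCommGroup F] [InnerProductSpace ℝ F] [CompleteSpace F]
  {f g : F → ℝ} {f' g' x : F}

theorem hasGradientAt_inner_left (v x : F) : HasGradientAt (⟪v, ·⟫) v x :=
  (innerSL ℝ v).hasFDerivAt

theorem hasGradientAt_norm_sq (x : F) : HasGradientAt (‖·‖ ^ 2) ((2 : ℝ) • x) x := by
  refine (hasStrictFDerivAt_norm_sq x).hasFDerivAt.congr_fderiv ?_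
  ext y
  simp

theorem HasGradientAt.comp_sub_const (a : F) (hf : HasGradientAt f f' (x - a)) :
    HasGradientAt (fun y => f (y - a)) f' x := by
  have h := hf.hasFDerivAt.comp x ((hasFDerivAt_id x).sub_const a)
  rwa [ContinuousLinearMap.comp_id] at h

theorem HasDerivAt.comp_hasGradientAt {h : ℝ → ℝ} {h' : ℝ} (hf : HasGradientAt f f' x)
    (hh : HasDerivAt h h' (f x)) : HasGradientAt (fun y => h (f y)) (h' • f') x := by
  rw [hasGradientAt_iff_hasFDerivAt, map_smul]
  exact hh.comp_hasFDerivAt x hf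

theorem HasGradientAt.mul (hf : HasGradientAt f f' x) (hg : HasGradientAt g g' x) :
    HasGradientAt (fun y => f y * g y) (f x • g' + g x • f') x := by
  rw [hasGradientAt_iff_hasFDerivAt, map_add, map_smul, map_smul]
  exact hf.hasFDerivAt.mul hg.hasFDerivAt

end GradientCalculus

section LogWeight

variable {F : Type*} [NormedAddCommGroup F] [InnerProductSpace ℝ F] [CompleteSpace F]

noncomputable def poissonBracket (a b : F → F → ℝ) (x ξ : F) : ℝ :=
  ⟪∇ (a x) ξ, ∇ (b · ξ) x⟫ - ⟪∇ (a · ξ) x, ∇ (b x) ξ⟫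

noncomputable def logWeightP (x₀ x ξ : F) : ℝ := ‖ξ‖ ^ 2 - (‖x - x₀‖ ^ 2)⁻¹

noncomputable def logWeightB (x₀ x ξ : F) : ℝ := 2 * ⟪x - x₀, ξ⟫ / ‖x - x₀‖ ^ 2

variable (x₀ ξ : F)

theorem hasGradientAt_logWeightP_fiber (x : F) :
    HasGradientAt (logWeightP x₀ x) ((2 : ℝ) • ξ) ξ := by
  unfold logWeightP
  convert (hasDerivAt_id' _).sub_const ((‖x - x₀‖ ^ 2)⁻¹) |>.comp_hasGradientAt
    (hasGradientAt_norm_sq ξ) using 1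
  module

theorem hasGradientAt_logWeightP_base {x : F} (hx : x ≠ x₀) :
    HasGradientAt (logWeightP x₀ · ξ) ((2 / ‖x - x₀‖ ^ 4) • (x - x₀)) x := by
  unfold logWeightP
  have hr : ‖x - x₀‖ ^ 2 ≠ 0 := by simpa [sub_eq_zero] using hx
  convert ((hasDerivAt_inv hr).const_sub (‖ξ‖ ^ 2)).comp_hasGradientAt
    ((hasGradientAt_norm_sq (x - x₀)).comp_sub_const x₀) using 1
  module

theorem hasGradientAt_logWeightB_fiber (x : F) :
    HasGradientAt (logWeightB x₀ x) ((2 / ‖x - x₀‖ ^ 2) • (x - x₀)) ξ := by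
  unfold logWeightB
  convert ((hasDerivAt_id' _).const_mul 2 |>.div_const (‖x - x₀‖ ^ 2)).comp_hasGradientAt
    (hasGradientAt_inner_left (x - x₀) ξ) using 1
  module

theorem hasGradientAt_logWeightB_base {x : F} (hx : x ≠ x₀) :
    HasGradientAt (logWeightB x₀ · ξ)
      ((2 / ‖x - x₀‖ ^ 2) • ξ - (4 * ⟪x - x₀, ξ⟫ / ‖x - x₀‖ ^ 4) • (x - x₀)) x := by
  have hr : ‖x - x₀‖ ^ 2 ≠ 0 := by simpa [sub_eq_zero] using hx
  have hnum := ((hasDerivAt_id' _).const_mul 2).comp_hasGradientAt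
    ((hasGradientAt_inner_left ξ (x - x₀)).comp_sub_const x₀)
  have hden := (hasDerivAt_inv hr).comp_hasGradientAt
    ((hasGradientAt_norm_sq (x - x₀)).comp_sub_const x₀)
  convert hnum.mul hden using 1
  · ext y; simp [logWeightB, div_eq_mul_inv, real_inner_comm]
  · rw [real_inner_comm]
    module

theorem poissonBracket_logWeightP_logWeightB {x : F} (hx : x ≠ x₀) :
    poissonBracket (logWeightP x₀) (logWeightB x₀) x ξ =
      4 / ‖x - x₀‖ ^ 2 * logWeightP x₀ x ξ - 2 * logWeightB x₀ x ξ ^ 2 := by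
  rw [poissonBracket, (hasGradientAt_logWeightP_fiber x₀ ξ x).gradient,
    (hasGradientAt_logWeightP_base x₀ ξ hx).gradient,
    (hasGradientAt_logWeightB_fiber x₀ ξ x).gradient,
    (hasGradientAt_logWeightB_base x₀ ξ hx).gradient, logWeightP, logWeightB]
  have hr : ‖x - x₀‖ ≠ 0 := by simpa [sub_eq_zero] using hx
  generalize x - x₀ = a at *
  simp only [inner_sub_right, real_inner_smul_left, real_inner_smul_right,
    real_inner_self_eq_norm_sq, real_inner_comm ξ a]
  field_simp
  ring

end LogWeight

/-- The logarithmic weight `φ(x) = log|x−x₀|` is a limiting Carleman weight: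
with `p(x,ξ) = |ξ|² − |∇φ(x)|²` (note `|∇φ(x)|² = |x−x₀|⁻²`) and
`b(x,ξ) = 2∇φ(x)·ξ = 2⟨x−x₀,ξ⟩/|x−x₀|²`, the Poisson bracket
`{p,b} = ∇_ξ p·∇_x b − ∇_x p·∇_ξ b` vanishes on `{p = b = 0}`. -/
theorem log_weight_limiting_carleman (n : ℕ) (x₀ : EuclideanSpace ℝ (Fin n))
    (p b : EuclideanSpace ℝ (Fin n) → EuclideanSpace ℝ (Fin n) → ℝ)
    (hp : ∀ x ξ, p x ξ = ‖ξ‖ ^ 2 - (‖x - x₀‖ ^ 2)⁻¹)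
    (hb : ∀ x ξ, b x ξ = 2 * (inner ℝ (x - x₀) ξ : ℝ) / ‖x - x₀‖ ^ 2)
    (x ξ : EuclideanSpace ℝ (Fin n)) (hx : x ≠ x₀)
    (hpz : p x ξ = 0) (hbz : b x ξ = 0) :
    (inner ℝ (gradient (fun ξ' => p x ξ') ξ) (gradient (fun x' => b x' ξ) x) : ℝ) -
      (inner ℝ (gradient (fun x' => p x' ξ) x) (gradient (fun ξ' => b x ξ') ξ) : ℝ) = 0 := by
  obtain rfl : p = logWeightP x₀ := funext₂ hp
  obtain rfl : b = logWeightB x₀ := funext₂ hb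
  show poissonBracket (logWeightP x₀) (logWeightB x₀) x ξ = 0
  rw [poissonBracket_logWeightP_logWeightB x₀ ξ hx, hpz, hbz]
  ring
end

section
/- Let α ∈ ℝⁿ be a unit vector, φ(x) = α·x, and P_φ = e^{φ/h}(−h²Δ)e^{−φ/h} = −h²Δ + 2h α·∇ − 1, with semiclassical symbol p_φ(ξ) = |ξ|² − 1 + 2i α·ξ. Then |p_φ(ξ)|² = (|ξ|²−1)² + 4(α·ξ)², which vanishes exactly on the codimension-2 sphere {|ξ| = 1, α·ξ = 0}, and there is c₀ > 0 such that for every ξ ∈ ℝⁿ one has |p_φ(ξ)| ≥ c₀ dist(ξ, {|ζ|=1, α·ζ=0})(1+|ξ|). -/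
open Metric

private lemma key_poly (s r t d : ℝ) (hr : 0 ≤ r) (ht : 0 ≤ t)
    (h1 : t^2 = s^2 + r^2) (h2 : d^2 ≤ s^2 + (r-1)^2) :
    (d*(1+t)/5)^2 ≤ (t^2-1)^2 + 4*s^2 := by
  have htr : r ≤ t := by nlinarith [sq_nonneg s]
  have hts : |s| ≤ t := by
    rw [abs_le]; constructor <;> nlinarith [sq_nonneg (t+s), sq_nonneg (t-s), sq_nonneg r]
  have htr2 : t - r ≤ |s| := by
    nlinarith [abs_nonneg s, sq_abs s]
  rcases le_total t 2 with h | h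
  · nlinarith [sq_nonneg (t-1), sq_nonneg s, sq_nonneg (r-1), sq_nonneg (t-r)]
  · nlinarith [sq_nonneg (t-1), sq_nonneg s, sq_nonneg (r-1), sq_nonneg (t-r), abs_nonneg s, sq_abs s]

/-- Properties of the semiclassical symbol `p_φ(ξ) = |ξ|² − 1 + 2iα·ξ` of the conjugated
Laplacian `e^{φ/h}(−h²Δ)e^{−φ/h}` with `φ(x) = α·x`, `|α| = 1`:
`|p_φ(ξ)|² = (|ξ|²−1)² + 4(α·ξ)²`, the symbol vanishes exactly on the codimension-two
sphere `{|ξ| = 1, α·ξ = 0}`, and it vanishes simply there: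
`|p_φ(ξ)| ≥ c₀ · dist(ξ, {|ζ|=1, α·ζ=0}) · (1+|ξ|)` for some `c₀ > 0`. -/
theorem conjugated_symbol_lower_bound (n : ℕ) (α : EuclideanSpace ℝ (Fin n))
    (hα : ‖α‖ = 1)
    (p : EuclideanSpace ℝ (Fin n) → ℂ)
    (hp : ∀ ξ, p ξ = ((‖ξ‖ ^ 2 - 1 : ℝ) : ℂ) + 2 * Complex.I * ((inner ℝ α ξ : ℝ) : ℂ)) :
    (∀ ξ, ‖p ξ‖ ^ 2 = (‖ξ‖ ^ 2 - 1) ^ 2 + 4 * (inner ℝ α ξ : ℝ) ^ 2) ∧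
      (∀ ξ, p ξ = 0 ↔ (‖ξ‖ = 1 ∧ (inner ℝ α ξ : ℝ) = 0)) ∧
      ∃ c₀ > 0, ∀ ξ,
        c₀ * Metric.infDist ξ {ζ : EuclideanSpace ℝ (Fin n) | ‖ζ‖ = 1 ∧ (inner ℝ α ζ : ℝ) = 0} *
            (1 + ‖ξ‖) ≤ ‖p ξ‖ := by
  have hp2 : ∀ ξ, p ξ = Complex.ofReal (‖ξ‖ ^ 2 - 1) +
      Complex.ofReal (2 * (inner ℝ α ξ : ℝ)) * Complex.I := by
    intro ξ
    rw [hp]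
    push_cast
    ring
  have habs : ∀ ξ, ‖p ξ‖ ^ 2 = (‖ξ‖ ^ 2 - 1) ^ 2 + 4 * (inner ℝ α ξ : ℝ) ^ 2 := by
    intro ξ
    rw [hp2, Complex.sq_norm, Complex.normSq_add_mul_I]
    ring
  refine ⟨habs, ?_, ?_⟩
  · intro ξ
    rw [hp2, Complex.ext_iff]
    simp only [Complex.add_re, Complex.add_im, Complex.ofReal_re, Complex.ofReal_im,
      Complex.mul_re, Complex.mul_im, Complex.I_re, Complex.I_im, Complex.zero_re,
      Complex.zero_im, mul_zero, mul_one, zero_mul, sub_zero, zero_add, zero_sub, add_zero]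
    constructor
    · rintro ⟨hre, him⟩
      have hfac : (‖ξ‖ - 1) * (‖ξ‖ + 1) = 0 := by nlinarith
      rcases mul_eq_zero.mp hfac with h | h
      · exact ⟨by linarith, by linarith⟩
      · have := norm_nonneg ξ; linarith
    · rintro ⟨h1, h2⟩
      rw [h1, h2]
      norm_num
  · set S : Set (EuclideanSpace ℝ (Fin n)) :=
      {ζ : EuclideanSpace ℝ (Fin n) | ‖ζ‖ = 1 ∧ (inner ℝ α ζ : ℝ) = 0} with hS
    refine ⟨1/5, by norm_num, ?_⟩
    intro ξ
    rcases S.eq_empty_or_nonempty with hSe | ⟨ζ₀, hζ₀⟩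
    · rw [hSe, Metric.infDist_empty]
      simpa using norm_nonneg (p ξ)
    · set s : ℝ := (inner ℝ α ξ : ℝ) with hs
      set w : EuclideanSpace ℝ (Fin n) := ξ - s • α with hwdef
      have hαα : (inner ℝ α α : ℝ) = 1 := by
        rw [real_inner_self_eq_norm_sq, hα]; norm_num
      have hwinner : (inner ℝ α w : ℝ) = 0 := by
        rw [hwdef, inner_sub_right, real_inner_smul_right, hαα]
        simp [hs]
      have hξ : ξ = s • α + w := by rw [hwdef]; abel
      have hnorm2 : ‖ξ‖^2 = s^2 + ‖w‖^2 := by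
        have h0 : (inner ℝ (s • α) w : ℝ) = 0 := by
          rw [real_inner_smul_left, hwinner]; ring
        rw [hξ, @norm_add_sq_real, h0, norm_smul, hα]
        simp [sq_abs]
      -- find a point ζ ∈ S with ‖ξ - ζ‖² = s² + (‖w‖-1)²
      have hζex : ∃ ζ ∈ S, ‖ξ - ζ‖^2 = s^2 + (‖w‖ - 1)^2 := by
        by_cases hw : w = 0
        · refine ⟨ζ₀, hζ₀, ?_⟩
          obtain ⟨hζ₀n, hζ₀i⟩ := hζ₀
          have hw0 : ‖w‖ = 0 := by rw [hw, norm_zero]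
          have hinner : (inner ℝ ξ ζ₀ : ℝ) = 0 := by
            rw [hξ, hw, add_zero, real_inner_smul_left, hζ₀i]
            ring
          rw [@norm_sub_sq_real, hinner, hζ₀n, hnorm2, hw0]
          ring
        · have hwn : ‖w‖ ≠ 0 := norm_ne_zero_iff.mpr hw
          refine ⟨‖w‖⁻¹ • w, ⟨?_, ?_⟩, ?_⟩
          · rw [norm_smul, norm_inv, norm_norm, inv_mul_cancel₀ hwn]
          · rw [real_inner_smul_right, hwinner]; ring
          · have hζn : ‖‖w‖⁻¹ • w‖ = 1 := by
              rw [norm_smul, norm_inv, norm_norm, inv_mul_cancel₀ hwn]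
            have hinner : (inner ℝ ξ (‖w‖⁻¹ • w) : ℝ) = ‖w‖ := by
              rw [hξ, inner_add_left, real_inner_smul_left, real_inner_smul_right,
                hwinner, real_inner_smul_right, real_inner_self_eq_norm_sq]
              field_simp
              ring
            rw [@norm_sub_sq_real, hinner, hζn, hnorm2]
            ring
      obtain ⟨ζ, hζS, hζd⟩ := hζex
      set d : ℝ := Metric.infDist ξ S with hd
      have hdle : d ≤ ‖ξ - ζ‖ := by
        rw [hd, ← dist_eq_norm]
        exact Metric.infDist_le_dist_of_mem hζS
      have hd0 : 0 ≤ d := Metric.infDist_nonneg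
      have hd2 : d^2 ≤ s^2 + (‖w‖ - 1)^2 := by
        rw [← hζd]
        exact pow_le_pow_left₀ hd0 hdle 2
      have hsq : (d * (1 + ‖ξ‖) / 5)^2 ≤ ‖p ξ‖^2 := by
        rw [habs ξ]
        exact key_poly s ‖w‖ ‖ξ‖ d (norm_nonneg w) (norm_nonneg ξ) hnorm2 hd2
      have h1t : 0 ≤ 1 + ‖ξ‖ := by positivity
      have hlhs : 0 ≤ d * (1 + ‖ξ‖) / 5 := by positivity
      have habs0 : 0 ≤ ‖p ξ‖ := norm_nonneg _
      nlinarith [hsq, hlhs, habs0]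
end
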